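/- arXiv:1804.07117 — 3 statements merged into one kernel-verified Lean document; each statement's English description precedes it below -/
import Mathlib

section
/- Consider an HMM on a compact X ⊂ ℝ with transition density f and likelihood g satisfying the uniform mixing bounds: there exist 0 < C̲ < C̄ < ∞ such that C̲ ≤ g(x', y_p) f(x, x') ≤ C̄ for all p ≥ 1 and (x, x') ∈ X², and similarly for the initial density. Then there exist ρ ∈ (0,1) and C < ∞ such that for every p ≥ 1 the time-0 marginal smoothers satisfy ‖π_{p,0} − π_{p−1,0}‖_tv ≤ C ρ^{p−1}, where π_{p,0} is the conditional law of X₀ given observations y_{0:p}. -/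
/-!
Write `α_q` for the unnormalised filter `p(x_q, y_{0:q})` and `β_m` for the backward functional
`back`. The time-`q` smoother given `y_{0:q+m}` has density `α_q β_m / Z`, and integrating out
`x_{q+1}` shows that it is the image of the time-`q+1` smoother under the backward kernel
`K_q(z, x) ∝ α_q(x) f(x, z) g(z, y_{q+1})`, which does not depend on the horizon. By the mixing
bounds, `K_q(z, ·) ≥ (C̲/C̄) α_q / ∫ α_q` for every `z`, so by Dobrushin's argument `K_q`
contracts the `L¹` distance of probability densities by `1 - C̲/C̄`. Pushing the difference of
the time-`p-1` smoothers for horizons `p` and `p-1` (of `L¹` norm at most `2`) back to time `0`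
through `p-1` such kernels gives the bound `2 (1 - C̲/C̄)^(p-1)`.
-/

open MeasureTheory Set

/-- Total variation distance between two measures. -/
noncomputable def tvDist {X : Type*} [MeasurableSpace X] (μ ν : Measure X) : ℝ :=
  ⨆ A : Set X, |(μ A).toReal - (ν A).toReal|

/-- Backward functional of the HMM: `back X f g m k x` integrates the product of
transitions and likelihoods over the states at times `k+1, …, k+m`, started from state `x`
at time `k`. -/
noncomputable def back (X : Set ℝ) (f : ℝ → ℝ → ℝ) (g : ℕ → ℝ → ℝ) : ℕ → ℕ → ℝ → ℝ
  | 0, _, _ => 1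
  | m + 1, k, x => ∫ z in X, f x z * g (k + 1) z * back X f g m (k + 1) z

/-- Density (w.r.t. Lebesgue on `X`) of the time-0 marginal smoother `π_{p,0}`,
i.e. the law of `X₀` given the observations `y_{0:p}` (the observations are absorbed in
`g`, with `g p x = g(x, y_p)`). -/
noncomputable def smootherDen (X : Set ℝ) (f0 : ℝ → ℝ) (f : ℝ → ℝ → ℝ) (g : ℕ → ℝ → ℝ)
    (p : ℕ) (x : ℝ) : ℝ :=
  f0 x * g 0 x * back X f g p 0 x / ∫ y in X, f0 y * g 0 y * back X f g p 0 y

/-- The time-0 marginal smoother `π_{p,0}` as a measure on `X`. -/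
noncomputable def smoother (X : Set ℝ) (f0 : ℝ → ℝ) (f : ℝ → ℝ → ℝ) (g : ℕ → ℝ → ℝ)
    (p : ℕ) : Measure ℝ :=
  (volume.restrict X).withDensity (fun x => ENNReal.ofReal (smootherDen X f0 f g p x))

open Function

theorem mul_mem_Icc_mul_of_nonneg {a b c d x y : ℝ} (ha : 0 ≤ a) (hc : 0 ≤ c)
    (hx : x ∈ Icc a b) (hy : y ∈ Icc c d) : x * y ∈ Icc (a * c) (b * d) :=
  ⟨mul_le_mul hx.1 hy.1 hc (ha.trans hx.1),
    mul_le_mul hx.2 hy.2 (hc.trans hy.1) (ha.trans (hx.1.trans hx.2))⟩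

section BoundedIntegrand

variable {α : Type*} [MeasurableSpace α] {μ : Measure α} {s : Set α} {h : α → ℝ} {c C : ℝ}

theorem integrableOn_of_forall_mem_Icc (hs : MeasurableSet s) (hμs : μ s ≠ ⊤)
    (hh : Measurable h) (hb : ∀ x ∈ s, h x ∈ Icc c C) :
    IntegrableOn h s μ :=
  Measure.integrableOn_of_bounded hμs hh.aestronglyMeasurable <|
    (ae_restrict_mem hs).mono fun x hx => abs_le_max_abs_abs (hb x hx).1 (hb x hx).2

theorem setIntegral_mem_Icc_of_forall_mem_Icc (hs : MeasurableSet s) (hμs : μ s ≠ ⊤)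
    (hh : Measurable h) (hb : ∀ x ∈ s, h x ∈ Icc c C) :
    ∫ x in s, h x ∂μ ∈ Icc (μ.real s * c) (μ.real s * C) := by
  have hi := integrableOn_of_forall_mem_Icc hs hμs hh hb
  refine ⟨?_, ?_⟩
  · simpa [setIntegral_const] using
      setIntegral_mono_on (integrableOn_const hμs) hi hs fun x hx => (hb x hx).1
  · simpa [setIntegral_const] using
      setIntegral_mono_on hi (integrableOn_const hμs) hs fun x hx => (hb x hx).2

end BoundedIntegrand

section TotalVariation

variable {α : Type*} [MeasurableSpace α] {μ : Measure α} {h₁ h₂ : α → ℝ}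

theorem measureReal_withDensity_ofReal {h : α → ℝ} (hi : Integrable h μ) (h0 : 0 ≤ᵐ[μ] h)
    {B : Set α} (hB : MeasurableSet B) :
    ((μ.withDensity fun x => ENNReal.ofReal (h x)) B).toReal = ∫ x in B, h x ∂μ := by
  rw [withDensity_apply _ hB,
    ← ofReal_integral_eq_lintegral_ofReal hi.restrict (ae_restrict_of_ae h0),
    ENNReal.toReal_ofReal (setIntegral_nonneg_of_ae_restrict (ae_restrict_of_ae h0))]

theorem measureReal_withDensity_le_add_integral_abs_sub (hi₁ : Integrable h₁ μ)
    (hi₂ : Integrable h₂ μ) (h₁0 : 0 ≤ᵐ[μ] h₁) (h₂0 : 0 ≤ᵐ[μ] h₂) (A : Set α) :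
    ((μ.withDensity fun x => ENNReal.ofReal (h₁ x)) A).toReal ≤
      ((μ.withDensity fun x => ENNReal.ofReal (h₂ x)) A).toReal + ∫ x, |h₁ x - h₂ x| ∂μ := by
  set ν₁ := μ.withDensity fun x => ENNReal.ofReal (h₁ x)
  set ν₂ := μ.withDensity fun x => ENNReal.ofReal (h₂ x)
  -- `A` need not be measurable: pass to a measurable hull for `ν₂`
  set B := toMeasurable ν₂ A
  have hB : MeasurableSet B := measurableSet_toMeasurable _ _
  have hν₁B : ν₁ B ≠ ⊤ := by
    rw [withDensity_apply _ hB,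
      ← ofReal_integral_eq_lintegral_ofReal hi₁.restrict (ae_restrict_of_ae h₁0)]
    exact ENNReal.ofReal_ne_top
  calc (ν₁ A).toReal ≤ (ν₁ B).toReal :=
        ENNReal.toReal_mono hν₁B (measure_mono (subset_toMeasurable _ _))
    _ = ∫ x in B, h₂ x ∂μ + ∫ x in B, (h₁ x - h₂ x) ∂μ := by
        rw [measureReal_withDensity_ofReal hi₁ h₁0 hB, integral_sub hi₁.restrict hi₂.restrict]
        abel
    _ ≤ ∫ x in B, h₂ x ∂μ + ∫ x, |h₁ x - h₂ x| ∂μ := by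
        have hd := (hi₁.sub hi₂).abs
        gcongr
        calc ∫ x in B, (h₁ x - h₂ x) ∂μ ≤ ∫ x in B, |h₁ x - h₂ x| ∂μ :=
              integral_mono (hi₁.sub hi₂).restrict hd.restrict fun x => le_abs_self _
          _ ≤ ∫ x, |h₁ x - h₂ x| ∂μ :=
              setIntegral_le_integral hd (.of_forall fun x => abs_nonneg _)
    _ = (ν₂ A).toReal + ∫ x, |h₁ x - h₂ x| ∂μ := by
        rw [← measureReal_withDensity_ofReal hi₂ h₂0 hB, measure_toMeasurable]


theorem tvDist_withDensity_le_integral_abs_sub (hi₁ : Integrable h₁ μ) (hi₂ : Integrable h₂ μ)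
    (h₁0 : 0 ≤ᵐ[μ] h₁) (h₂0 : 0 ≤ᵐ[μ] h₂) :
    tvDist (μ.withDensity fun x => ENNReal.ofReal (h₁ x))
      (μ.withDensity fun x => ENNReal.ofReal (h₂ x)) ≤ ∫ x, |h₁ x - h₂ x| ∂μ := by
  refine ciSup_le fun A => abs_sub_le_iff.2 ⟨?_, ?_⟩
  · linarith [measureReal_withDensity_le_add_integral_abs_sub hi₁ hi₂ h₁0 h₂0 A]
  · have := measureReal_withDensity_le_add_integral_abs_sub hi₂ hi₁ h₂0 h₁0 A
    simp only [abs_sub_comm (h₂ _)] at this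
    linarith

end TotalVariation

section Dobrushin

variable {α : Type*} [MeasurableSpace α] {μ : Measure α} [SFinite μ]
  {K : α → α → ℝ} {ν d : α → ℝ} {ε : ℝ}

theorem integral_abs_integral_kernel_mul_le (hKm : AEStronglyMeasurable (uncurry K) (μ.prod μ))
    (hK : ∀ᵐ z ∂μ, ∫ x, K z x ∂μ = 1) (hKν : ∀ᵐ z ∂μ, ∀ᵐ x ∂μ, ε * ν x ≤ K z x)
    (hν : ∫ x, ν x ∂μ = 1) (hd : Integrable d μ) (hd0 : ∫ z, d z ∂μ = 0) :
    ∫ x, |∫ z, K z x * d z ∂μ| ∂μ ≤ (1 - ε) * ∫ z, |d z| ∂μ := by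
  have hνi : Integrable ν μ := .of_integral_ne_zero (by rw [hν]; exact one_ne_zero)
  have hKi : ∀ᵐ z ∂μ, Integrable (K z) μ :=
    hK.mono fun z hz => .of_integral_ne_zero (by rw [hz]; exact one_ne_zero)
  -- subtracting the common component `ε ν` costs nothing, since `d` has integral zero
  set G : α × α → ℝ := fun p => (K p.1 p.2 - ε * ν p.2) * d p.1
  have hGm : AEStronglyMeasurable G (μ.prod μ) :=
    (hKm.sub (hνi.1.comp_snd.const_mul ε)).mul hd.1.comp_fst
  have hG_norm : ∀ᵐ z ∂μ, ∫ x, ‖G (z, x)‖ ∂μ = (1 - ε) * |d z| := by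
    filter_upwards [hK, hKi, hKν] with z hz hzi hzν
    calc ∫ x, ‖G (z, x)‖ ∂μ = ∫ x, (K z x - ε * ν x) * |d z| ∂μ := by
          refine integral_congr_ae (hzν.mono fun x hx => ?_)
          simp only [G]
          rw [Real.norm_eq_abs, abs_mul, abs_of_nonneg (sub_nonneg.2 hx)]
      _ = (1 - ε) * |d z| := by
          rw [integral_mul_const, integral_sub hzi (hνi.const_mul ε), integral_const_mul, hz, hν,
            mul_one]
  have hGi : Integrable G (μ.prod μ) :=
    (integrable_prod_iff hGm).2
      ⟨hKi.mono fun z hz => (hz.sub (hνi.const_mul ε)).mul_const (d z),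
        (hd.abs.const_mul (1 - ε)).congr (hG_norm.mono fun z hz => hz.symm)⟩
  have hrepr : ∀ᵐ x ∂μ, ∫ z, K z x * d z ∂μ = ∫ z, G (z, x) ∂μ := by
    filter_upwards [hGi.prod_left_ae] with x hx
    calc ∫ z, K z x * d z ∂μ = ∫ z, (G (z, x) + ε * ν x * d z) ∂μ :=
          integral_congr_ae (.of_forall fun z => by simp only [G]; ring)
      _ = ∫ z, G (z, x) ∂μ := by
          rw [integral_add hx (hd.const_mul _), integral_const_mul, hd0, mul_zero, add_zero]
  calc ∫ x, |∫ z, K z x * d z ∂μ| ∂μ = ∫ x, ‖∫ z, G (z, x) ∂μ‖ ∂μ :=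
        integral_congr_ae (hrepr.mono fun x hx => by simp only [hx, Real.norm_eq_abs])
    _ ≤ ∫ x, ∫ z, ‖G (z, x)‖ ∂μ ∂μ :=
        integral_mono_of_nonneg (.of_forall fun _ => norm_nonneg _)
          hGi.integral_norm_prod_right (.of_forall fun _ => norm_integral_le_integral_norm _)
    _ = ∫ z, ∫ x, ‖G (z, x)‖ ∂μ ∂μ :=
        (integral_integral_swap (f := fun z x => ‖G (z, x)‖) hGi.norm).symm
    _ = ∫ z, (1 - ε) * |d z| ∂μ := integral_congr_ae hG_norm
    _ = (1 - ε) * ∫ z, |d z| ∂μ := integral_const_mul _ _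

end Dobrushin

structure UniformlyMixing (X : Set ℝ) (f0 : ℝ → ℝ) (f : ℝ → ℝ → ℝ) (g : ℕ → ℝ → ℝ)
    (Cl Cu : ℝ) : Prop where
  measurableSet : MeasurableSet X
  volume_real_pos : 0 < volume.real X
  measurable_init : Measurable f0
  measurable_trans : Measurable (uncurry f)
  measurable_lik : ∀ p, Measurable (g p)
  lower_pos : 0 < Cl
  init_mem : ∀ x ∈ X, g 0 x * f0 x ∈ Icc Cl Cu
  trans_mem : ∀ k : ℕ, ∀ x ∈ X, ∀ x' ∈ X, g (k + 1) x' * f x x' ∈ Icc Cl Cu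

namespace HMM

variable (X : Set ℝ) (f0 : ℝ → ℝ) (f : ℝ → ℝ → ℝ) (g : ℕ → ℝ → ℝ)

/- `forward q x = p(x_q, y_{0:q})` is the unnormalised filter, `evidence q m = p(y_{0:q+m})` (the
same for every `q`), `smoothDen q m` is the density of the law of `X_q` given `y_{0:q+m}`, and
`backKernel q z` is the density of the law of `X_q` given `X_{q+1} = z` and `y_{0:q}`. -/

noncomputable def forward : ℕ → ℝ → ℝ
  | 0, x => f0 x * g 0 x
  | q + 1, x => ∫ z in X, forward q z * (g (q + 1) x * f z x)

noncomputable def evidence (q m : ℕ) : ℝ :=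
  ∫ x in X, forward X f0 f g q x * back X f g m q x

noncomputable def smoothDen (q m : ℕ) (x : ℝ) : ℝ :=
  forward X f0 f g q x * back X f g m q x / evidence X f0 f g q m

noncomputable def backKernel (q : ℕ) (z x : ℝ) : ℝ :=
  forward X f0 f g q x * (g (q + 1) z * f x z) / forward X f0 f g (q + 1) z

variable {X f0 f g}

theorem measurable_back (hf : Measurable (uncurry f)) (hg : ∀ p, Measurable (g p)) :
    ∀ m k, Measurable (back X f g m k)
  | 0, _ => measurable_const
  | m + 1, k => (((hf.mul ((hg (k + 1)).comp measurable_snd)).mul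
      ((measurable_back hf hg m (k + 1)).comp measurable_snd)).stronglyMeasurable
        |>.integral_prod_right').measurable

theorem measurable_forward (hf0 : Measurable f0) (hf : Measurable (uncurry f))
    (hg : ∀ p, Measurable (g p)) : ∀ q, Measurable (forward X f0 f g q)
  | 0 => hf0.mul (hg 0)
  | q + 1 => (((measurable_forward hf0 hf hg q).comp measurable_snd).mul
      (((hg (q + 1)).comp measurable_fst).mul (hf.comp measurable_swap))).stronglyMeasurable
        |>.integral_prod_right'.measurable

end HMM

namespace UniformlyMixing

open HMM

variable {X : Set ℝ} {f0 : ℝ → ℝ} {f : ℝ → ℝ → ℝ} {g : ℕ → ℝ → ℝ} {Cl Cu : ℝ}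
  (hM : UniformlyMixing X f0 f g Cl Cu)
include hM

theorem volume_ne_top : volume X ≠ ⊤ :=
  (ENNReal.toReal_pos_iff.1 hM.volume_real_pos).2.ne

theorem lower_mul_volume_pos : 0 < Cl * volume.real X :=
  mul_pos hM.lower_pos hM.volume_real_pos

theorem lower_le_upper : Cl ≤ Cu := by
  obtain ⟨x, hx⟩ := nonempty_of_measure_ne_zero (ENNReal.toReal_pos_iff.1 hM.volume_real_pos).1.ne'
  exact (hM.init_mem x hx).1.trans (hM.init_mem x hx).2

theorem measurable_back (m k : ℕ) : Measurable (back X f g m k) :=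
  HMM.measurable_back hM.measurable_trans hM.measurable_lik m k

theorem measurable_forward (q : ℕ) : Measurable (forward X f0 f g q) :=
  HMM.measurable_forward hM.measurable_init hM.measurable_trans hM.measurable_lik q

theorem back_mem_Icc :
    ∀ m k, ∀ x ∈ X, back X f g m k x ∈ Icc ((Cl * volume.real X) ^ m) ((Cu * volume.real X) ^ m)
  | 0, _, _, _ => by simp [back]
  | m + 1, k, x, hx => by
    have hb := setIntegral_mem_Icc_of_forall_mem_Icc (μ := volume)
      (h := fun z => f x z * g (k + 1) z * back X f g m (k + 1) z) hM.measurableSet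
      hM.volume_ne_top
      ((hM.measurable_trans.comp measurable_prodMk_left).mul (hM.measurable_lik (k + 1)) |>.mul
        (hM.measurable_back m (k + 1)))
      fun z hz => by
        simp only [mul_comm (f x z)]
        exact mul_mem_Icc_mul_of_nonneg hM.lower_pos.le (pow_pos hM.lower_mul_volume_pos m).le
          (hM.trans_mem k x hx z hz) (back_mem_Icc m (k + 1) z hz)
    exact ⟨Eq.trans_le (by ring) hb.1, hb.2.trans_eq (by ring)⟩

theorem forward_mem_Icc :
    ∀ q, ∀ x ∈ X, forward X f0 f g q x ∈
      Icc (Cl * (Cl * volume.real X) ^ q) (Cu * (Cu * volume.real X) ^ q)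
  | 0, x, hx => by simpa [forward, mul_comm (f0 x)] using hM.init_mem x hx
  | q + 1, x, hx => by
    have hb := setIntegral_mem_Icc_of_forall_mem_Icc (μ := volume)
      (h := fun z => forward X f0 f g q z * (g (q + 1) x * f z x)) hM.measurableSet
      hM.volume_ne_top
      ((hM.measurable_forward q).mul
        (measurable_const.mul (hM.measurable_trans.comp measurable_prodMk_right)))
      fun z hz => mul_mem_Icc_mul_of_nonneg
        (mul_pos hM.lower_pos (pow_pos hM.lower_mul_volume_pos q)).le hM.lower_pos.le
        (forward_mem_Icc q z hz) (hM.trans_mem q z hz x hx)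
    exact ⟨Eq.trans_le (by ring) hb.1, hb.2.trans_eq (by ring)⟩

theorem back_pos (m k : ℕ) {x : ℝ} (hx : x ∈ X) : 0 < back X f g m k x :=
  (pow_pos hM.lower_mul_volume_pos m).trans_le (hM.back_mem_Icc m k x hx).1

theorem forward_pos (q : ℕ) {x : ℝ} (hx : x ∈ X) : 0 < forward X f0 f g q x :=
  (mul_pos hM.lower_pos (pow_pos hM.lower_mul_volume_pos q)).trans_le
    (hM.forward_mem_Icc q x hx).1

theorem evidence_pos (q m : ℕ) : 0 < evidence X f0 f g q m := by
  have hb := setIntegral_mem_Icc_of_forall_mem_Icc hM.measurableSet hM.volume_ne_top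
    ((hM.measurable_forward q).mul (hM.measurable_back m q)) fun x hx =>
      mul_mem_Icc_mul_of_nonneg (mul_pos hM.lower_pos (pow_pos hM.lower_mul_volume_pos q)).le
        (pow_pos hM.lower_mul_volume_pos m).le (hM.forward_mem_Icc q x hx)
        (hM.back_mem_Icc m q x hx)
  exact (mul_pos hM.volume_real_pos (mul_pos (mul_pos hM.lower_pos
    (pow_pos hM.lower_mul_volume_pos q)) (pow_pos hM.lower_mul_volume_pos m))).trans_le hb.1

theorem integral_forward_pos (q : ℕ) : 0 < ∫ x in X, forward X f0 f g q x := by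
  simpa [evidence, back] using hM.evidence_pos q 0

theorem integrableOn_back_integrand (m k : ℕ) {x : ℝ} (hx : x ∈ X) :
    IntegrableOn (fun z => f x z * g (k + 1) z * back X f g m (k + 1) z) X :=
  .of_integral_ne_zero (hM.back_pos (m + 1) k hx).ne'

theorem evidence_succ (q m : ℕ) : evidence X f0 f g q (m + 1) = evidence X f0 f g (q + 1) m := by
  set F : ℝ → ℝ → ℝ := fun x z =>
    forward X f0 f g q x * (g (q + 1) z * f x z) * back X f g m (q + 1) z
  have hF : Integrable (uncurry F) ((volume.restrict X).prod (volume.restrict X)) := by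
    rw [Measure.prod_restrict]
    refine integrableOn_of_forall_mem_Icc (hM.measurableSet.prod hM.measurableSet)
      (by simp [Measure.prod_prod, ENNReal.mul_ne_top, hM.volume_ne_top])
      ((((hM.measurable_forward q).comp measurable_fst).mul
        (((hM.measurable_lik (q + 1)).comp measurable_snd).mul hM.measurable_trans)).mul
        ((hM.measurable_back m (q + 1)).comp measurable_snd))
      fun p hp => mul_mem_Icc_mul_of_nonneg ?_ (pow_pos hM.lower_mul_volume_pos m).le
        (mul_mem_Icc_mul_of_nonneg ?_ hM.lower_pos.le
          (hM.forward_mem_Icc q p.1 hp.1) (hM.trans_mem q p.1 hp.1 p.2 hp.2))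
        (hM.back_mem_Icc m (q + 1) p.2 hp.2)
    all_goals have := hM.lower_pos; have := hM.lower_mul_volume_pos; positivity
  calc evidence X f0 f g q (m + 1) = ∫ x in X, ∫ z in X, F x z := by
        refine integral_congr_ae (.of_forall fun x => ?_)
        simp only [back, F, ← integral_const_mul]
        congr 1 with z
        ring
    _ = ∫ z in X, ∫ x in X, F x z := integral_integral_swap hF
    _ = evidence X f0 f g (q + 1) m := by
        refine integral_congr_ae (.of_forall fun z => ?_)
        simp only [F, integral_mul_const, forward]

theorem integral_smoothDen (q m : ℕ) : ∫ x in X, smoothDen X f0 f g q m x = 1 := by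
  simp only [smoothDen]
  rw [integral_div]
  exact div_self (hM.evidence_pos q m).ne'

theorem integrableOn_smoothDen (q m : ℕ) : IntegrableOn (smoothDen X f0 f g q m) X :=
  .of_integral_ne_zero (by rw [hM.integral_smoothDen]; exact one_ne_zero)

theorem smoothDen_nonneg (q m : ℕ) {x : ℝ} (hx : x ∈ X) : 0 ≤ smoothDen X f0 f g q m x :=
  div_nonneg (mul_pos (hM.forward_pos q hx) (hM.back_pos m q hx)).le (hM.evidence_pos q m).le

theorem integral_backKernel (q : ℕ) {z : ℝ} (hz : z ∈ X) :
    ∫ x in X, backKernel X f0 f g q z x = 1 := by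
  simp only [backKernel]
  rw [integral_div]
  exact div_self (hM.forward_pos (q + 1) hz).ne'

theorem div_mul_forward_div_integral_le_backKernel (q : ℕ) {z x : ℝ} (hz : z ∈ X) (hx : x ∈ X) :
    Cl / Cu * (forward X f0 f g q x / ∫ w in X, forward X f0 f g q w) ≤
      backKernel X f0 f g q z x := by
  have hfwd : forward X f0 f g (q + 1) z ≤ Cu * ∫ w in X, forward X f0 f g q w := by
    rw [← integral_const_mul]
    refine setIntegral_mono_on (.of_integral_ne_zero (hM.forward_pos (q + 1) hz).ne')
      ((Integrable.of_integral_ne_zero (hM.integral_forward_pos q).ne').const_mul Cu)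
      hM.measurableSet fun w hw => ?_
    rw [mul_comm Cu]
    exact mul_le_mul_of_nonneg_left (hM.trans_mem q w hw z hz).2 (hM.forward_pos q hw).le
  calc Cl / Cu * (forward X f0 f g q x / ∫ w in X, forward X f0 f g q w)
      = forward X f0 f g q x * Cl / (Cu * ∫ w in X, forward X f0 f g q w) := by ring
    _ ≤ backKernel X f0 f g q z x :=
      div_le_div₀ (mul_pos (hM.forward_pos q hx)
        (hM.lower_pos.trans_le (hM.trans_mem q x hx z hz).1)).le
        (mul_le_mul_of_nonneg_left (hM.trans_mem q x hx z hz).1 (hM.forward_pos q hx).le)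
        (hM.forward_pos (q + 1) hz) hfwd

theorem measurable_backKernel (q : ℕ) : Measurable (uncurry (backKernel X f0 f g q)) :=
  ((hM.measurable_forward q).comp measurable_snd |>.mul
    (((hM.measurable_lik (q + 1)).comp measurable_fst).mul
      (hM.measurable_trans.comp measurable_swap))).div
    ((hM.measurable_forward (q + 1)).comp measurable_fst)

theorem backKernel_mul_smoothDen_ae_eq (q m : ℕ) (x : ℝ) :
    (fun z => backKernel X f0 f g q z x * smoothDen X f0 f g (q + 1) m z) =ᵐ[volume.restrict X]
      fun z => forward X f0 f g q x / evidence X f0 f g q (m + 1) *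
        (f x z * g (q + 1) z * back X f g m (q + 1) z) := by
  filter_upwards [ae_restrict_mem hM.measurableSet] with z hz
  have := (hM.forward_pos (q + 1) hz).ne'
  rw [backKernel, smoothDen, ← hM.evidence_succ]
  field_simp

theorem smoothDen_succ_sub_eq_integral (q m : ℕ) {x : ℝ} (hx : x ∈ X) :
    smoothDen X f0 f g q (m + 2) x - smoothDen X f0 f g q (m + 1) x =
      ∫ z in X, backKernel X f0 f g q z x *
        (smoothDen X f0 f g (q + 1) (m + 1) z - smoothDen X f0 f g (q + 1) m z) := by
  have hrepr := fun m => hM.backKernel_mul_smoothDen_ae_eq q m x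
  have hint := fun m =>
    ((hM.integrableOn_back_integrand m q hx).const_mul _).congr (hrepr m).symm
  simp only [mul_sub]
  rw [integral_sub (hint (m + 1)) (hint m), integral_congr_ae (hrepr (m + 1)),
    integral_congr_ae (hrepr m), integral_const_mul, integral_const_mul]
  simp only [smoothDen, back, mul_div_right_comm]

theorem integral_abs_smoothDen_sub_le_two (q : ℕ) :
    ∫ x in X, |smoothDen X f0 f g q 1 x - smoothDen X f0 f g q 0 x| ≤ 2 := by
  have hi := hM.integrableOn_smoothDen q
  calc ∫ x in X, |smoothDen X f0 f g q 1 x - smoothDen X f0 f g q 0 x|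
      ≤ ∫ x in X, (smoothDen X f0 f g q 1 x + smoothDen X f0 f g q 0 x) :=
        setIntegral_mono_on ((hi 1).sub (hi 0)).abs ((hi 1).add (hi 0)) hM.measurableSet
          fun x hx => (abs_sub _ _).trans_eq <| by
            rw [abs_of_nonneg (hM.smoothDen_nonneg q 1 hx),
              abs_of_nonneg (hM.smoothDen_nonneg q 0 hx)]
    _ = 2 := by
        rw [integral_add (hi 1) (hi 0), hM.integral_smoothDen, hM.integral_smoothDen]
        norm_num

theorem integral_abs_smoothDen_succ_sub_le_contract (q m : ℕ) :
    ∫ x in X, |smoothDen X f0 f g q (m + 2) x - smoothDen X f0 f g q (m + 1) x| ≤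
      (1 - Cl / Cu) * ∫ z in X,
        |smoothDen X f0 f g (q + 1) (m + 1) z - smoothDen X f0 f g (q + 1) m z| := by
  have hi := hM.integrableOn_smoothDen (q + 1)
  have hX := ae_restrict_mem (μ := volume) hM.measurableSet
  rw [setIntegral_congr_fun hM.measurableSet fun x hx => by
    rw [hM.smoothDen_succ_sub_eq_integral q m hx]]
  exact integral_abs_integral_kernel_mul_le (hM.measurable_backKernel q).aestronglyMeasurable
    (hX.mono fun z hz => hM.integral_backKernel q hz)
    (hX.mono fun z hz => hX.mono fun x hx =>
      hM.div_mul_forward_div_integral_le_backKernel q hz hx)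
    (by rw [integral_div]; exact div_self (hM.integral_forward_pos q).ne')
    ((hi (m + 1)).sub (hi m))
    (by rw [integral_sub (hi (m + 1)) (hi m), hM.integral_smoothDen, hM.integral_smoothDen,
      sub_self])

theorem integral_abs_smoothDen_succ_sub_le (m q : ℕ) :
    ∫ x in X, |smoothDen X f0 f g q (m + 1) x - smoothDen X f0 f g q m x| ≤
      2 * (1 - Cl / Cu) ^ m := by
  induction m generalizing q with
  | zero => simpa using hM.integral_abs_smoothDen_sub_le_two q
  | succ m ih =>
    have hρ : 0 ≤ 1 - Cl / Cu := sub_nonneg.2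
      (div_le_one_of_le₀ hM.lower_le_upper (hM.lower_pos.le.trans hM.lower_le_upper))
    calc _ ≤ (1 - Cl / Cu) * ∫ z in X,
            |smoothDen X f0 f g (q + 1) (m + 1) z - smoothDen X f0 f g (q + 1) m z| :=
          hM.integral_abs_smoothDen_succ_sub_le_contract q m
      _ ≤ (1 - Cl / Cu) * (2 * (1 - Cl / Cu) ^ m) := mul_le_mul_of_nonneg_left (ih (q + 1)) hρ
      _ = 2 * (1 - Cl / Cu) ^ (m + 1) := by ring

end UniformlyMixing

/-- Under the uniform mixing bounds (A1), consecutive time-0 marginal smoothers are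
geometrically close in total variation. -/
theorem stmt4 (a b : ℝ) (hab : a < b) (f0 : ℝ → ℝ) (f : ℝ → ℝ → ℝ) (g : ℕ → ℝ → ℝ)
    (hf0 : Measurable f0) (hf : Measurable (Function.uncurry f))
    (hg : ∀ p, Measurable (g p))
    (Cl Cu : ℝ) (hCl : 0 < Cl) (hClu : Cl < Cu)
    (hA1_0 : ∀ x ∈ Set.Icc a b, Cl ≤ g 0 x * f0 x ∧ g 0 x * f0 x ≤ Cu)
    (hA1 : ∀ p : ℕ, 1 ≤ p → ∀ x ∈ Set.Icc a b, ∀ x' ∈ Set.Icc a b,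
      Cl ≤ g p x' * f x x' ∧ g p x' * f x x' ≤ Cu) :
    ∃ (C : ℝ) (ρ : ℝ), 0 < C ∧ ρ ∈ Set.Ioo (0:ℝ) 1 ∧
      ∀ p : ℕ, 1 ≤ p →
        tvDist (smoother (Set.Icc a b) f0 f g p) (smoother (Set.Icc a b) f0 f g (p - 1))
          ≤ C * ρ ^ (p - 1) := by
  have hM : UniformlyMixing (Icc a b) f0 f g Cl Cu :=
    { measurableSet := measurableSet_Icc
      volume_real_pos := by simpa using hab
      measurable_init := hf0
      measurable_trans := hf
      measurable_lik := hg
      lower_pos := hCl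
      init_mem := hA1_0
      trans_mem := fun k => hA1 (k + 1) k.succ_pos }
  have hCu : 0 < Cu := hCl.trans hClu
  refine ⟨2, 1 - Cl / Cu, two_pos,
    ⟨sub_pos.2 ((div_lt_one hCu).2 hClu), sub_lt_self _ (div_pos hCl hCu)⟩, fun p hp => ?_⟩
  obtain ⟨m, rfl⟩ := Nat.exists_eq_add_of_le' hp
  have hX := ae_restrict_mem (μ := volume) hM.measurableSet
  exact (tvDist_withDensity_le_integral_abs_sub (hM.integrableOn_smoothDen 0 (m + 1))
    (hM.integrableOn_smoothDen 0 m) (hX.mono fun x hx => hM.smoothDen_nonneg 0 (m + 1) hx)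
    (hX.mono fun x hx => hM.smoothDen_nonneg 0 m hx)).trans
    (hM.integral_abs_smoothDen_succ_sub_le m 0)
end

section
/- (Cost of the multilevel estimator.) Suppose for each p ∈ {1,…,n*} an estimator has variance at most C ρ^{p−1}/N_p with ρ ∈ (0,1), the level-0 estimator has variance at most C/N₀, and the squared bias from truncating at n* is at most C ρ^{2n*}. Given ε > 0, choosing n* = ⌈|log ε / log ρ|⌉ and N_p = ⌈ε^{−2}(p+1)^{−1−δ}⌉ for some δ > 0 yields total mean square error O(ε²) with total cost n* + ∑_{p=0}^{n*} N_p = O(ε^{−2}). -/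
/-!
Write `E = ε⁻²`. Since `N_p ≥ E (p+1)^{-1-δ}`, the level-`p` variance is at most
`C ε² ρ^{p-1} (p+1)^{1+δ}`, and these bounds are summable because the geometric factor beats the
polynomial one; the choice of `n*` gives `ρ^{n*} ≤ ε`, so the bias is at most `C ε²`. For the cost,
`N_p ≤ E (p+1)^{-1-δ} + 1` sums to at most `E ∑ (p+1)^{-1-δ} + n* + 1`, and
`n* ≤ |log ε| / |log ρ| + 1 ≤ ε⁻¹ / |log ρ| + 1`.
-/

open Real Finset

theorem sum_natCeil_le_sum_add_card {ι R : Type*} [Semiring R] [LinearOrder R]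
    [IsStrictOrderedRing R] [FloorSemiring R] (s : Finset ι) {f : ι → R} (hf : ∀ i ∈ s, 0 ≤ f i) :
    ∑ i ∈ s, (⌈f i⌉₊ : R) ≤ ∑ i ∈ s, f i + #s := by
  calc ∑ i ∈ s, (⌈f i⌉₊ : R) ≤ ∑ i ∈ s, (f i + 1) :=
        sum_le_sum fun i hi => (Nat.ceil_lt_add_one (hf i hi)).le
    _ = ∑ i ∈ s, f i + #s := by rw [sum_add_distrib, sum_const, nsmul_one]

theorem summable_pow_mul_add_one_rpow {ρ : ℝ} (hρ0 : 0 < ρ) (hρ1 : ρ < 1) (s : ℝ) :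
    Summable fun p : ℕ => ρ ^ p * ((p : ℝ) + 1) ^ s := by
  set k := ⌈s⌉₊
  have hk : Summable fun p : ℕ => ((p + 1 : ℕ) : ℝ) ^ k * ρ ^ (p + 1) :=
    (summable_nat_add_iff (f := fun n : ℕ => (n : ℝ) ^ k * ρ ^ n) 1).mpr
      (summable_pow_mul_geometric_of_norm_lt_one k (by rwa [norm_of_nonneg hρ0.le]))
  refine .of_nonneg_of_le (fun p => by positivity) (fun p => ?_) (hk.div_const ρ)
  calc ρ ^ p * ((p : ℝ) + 1) ^ s ≤ ρ ^ p * ((p : ℝ) + 1) ^ (k : ℝ) := by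
        gcongr
        · exact le_add_of_nonneg_left p.cast_nonneg
        · exact Nat.le_ceil s
    _ = ((p + 1 : ℕ) : ℝ) ^ k * ρ ^ (p + 1) / ρ := by
        rw [rpow_natCast]; push_cast; field_simp; ring

theorem pow_sub_one_mul_self_le {ρ : ℝ} (h1 : ρ ≤ 1) : ∀ p : ℕ, ρ ^ (p - 1) * ρ ≤ ρ ^ p
  | 0 => by simpa using h1
  | p + 1 => by simp [pow_succ]

theorem summable_pow_sub_one_mul_add_one_rpow {ρ : ℝ} (hρ0 : 0 < ρ) (hρ1 : ρ < 1) (s : ℝ) :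
    Summable fun p : ℕ => ρ ^ (p - 1) * ((p : ℝ) + 1) ^ s := by
  refine .of_nonneg_of_le (fun p => by positivity) (fun p => ?_)
    ((summable_pow_mul_add_one_rpow hρ0 hρ1 s).div_const ρ)
  rw [le_div_iff₀ hρ0, mul_right_comm]
  gcongr
  exact pow_sub_one_mul_self_le hρ1.le p

theorem summable_add_one_rpow_neg {s : ℝ} (hs : 1 < s) :
    Summable fun p : ℕ => ((p : ℝ) + 1) ^ (-s) :=
  ((summable_one_div_nat_add_rpow 1 s).mpr hs).congr fun p => by
    rw [abs_of_pos (by positivity), rpow_neg (by positivity), one_div]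

noncomputable def truncationLevel (ρ ε : ℝ) : ℕ := ⌈|log ε / log ρ|⌉₊

noncomputable def sampleSize (δ ε : ℝ) (p : ℕ) : ℕ := ⌈ε ^ (-2 : ℝ) * ((p : ℝ) + 1) ^ (-(1 + δ))⌉₊

section Multilevel

variable {ρ δ ε : ℝ}

theorem pow_truncationLevel_le (hρ0 : 0 < ρ) (hρ1 : ρ < 1) (hε : 0 < ε) :
    ρ ^ truncationLevel ρ ε ≤ ε := by
  have hn : log ε / log ρ ≤ truncationLevel ρ ε := (le_abs_self _).trans (Nat.le_ceil _)
  rw [← log_le_log_iff (pow_pos hρ0 _) hε, log_pow]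
  exact (div_le_iff_of_neg (log_neg hρ0 hρ1)).mp hn

theorem truncationLevel_le (hρ0 : 0 < ρ) (hρ1 : ρ < 1) (hε0 : 0 < ε) (hε1 : ε ≤ 1) :
    (truncationLevel ρ ε : ℝ) ≤ ε⁻¹ / |log ρ| + 1 := by
  have hlogρ : 0 < |log ρ| := abs_pos.mpr (log_neg hρ0 hρ1).ne
  have hlogε : |log ε| ≤ ε⁻¹ := by
    have h := abs_log_mul_self_lt ε hε0 hε1
    rw [abs_mul, abs_of_pos hε0] at h
    rw [← one_div, le_div_iff₀ hε0]
    exact h.le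
  calc (truncationLevel ρ ε : ℝ) ≤ |log ε / log ρ| + 1 := (Nat.ceil_lt_add_one (abs_nonneg _)).le
    _ ≤ ε⁻¹ / |log ρ| + 1 := by rw [abs_div]; gcongr

theorem rpow_neg_two_eq_inv_sq (hε : 0 < ε) : ε ^ (-2 : ℝ) = (ε ^ 2)⁻¹ := by
  rw [rpow_neg hε.le, rpow_two]

theorem div_sampleSize_le {c : ℝ} (hc : 0 ≤ c) (hε : 0 < ε) (p : ℕ) :
    c / sampleSize δ ε p ≤ c * ε ^ 2 * ((p : ℝ) + 1) ^ (1 + δ) := by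
  have hpos : 0 < ε ^ (-2 : ℝ) * ((p : ℝ) + 1) ^ (-(1 + δ)) := by positivity
  calc c / sampleSize δ ε p ≤ c / (ε ^ (-2 : ℝ) * ((p : ℝ) + 1) ^ (-(1 + δ))) :=
        div_le_div_of_nonneg_left hc hpos (Nat.le_ceil _)
    _ = c * ε ^ 2 * ((p : ℝ) + 1) ^ (1 + δ) := by
        rw [rpow_neg_two_eq_inv_sq hε, rpow_neg (by positivity), ← div_div, div_inv_eq_mul,
          div_inv_eq_mul]

theorem variance_add_bias_le {C : ℝ} (hC : 0 ≤ C) (hρ0 : 0 < ρ) (hρ1 : ρ < 1) (hε : 0 < ε) :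
    C / sampleSize δ ε 0 + ∑ p ∈ Icc 1 (truncationLevel ρ ε), C * ρ ^ (p - 1) / sampleSize δ ε p
        + C * ρ ^ (2 * truncationLevel ρ ε)
      ≤ C * (∑' p : ℕ, ρ ^ (p - 1) * ((p : ℝ) + 1) ^ (1 + δ) + 1) * ε ^ 2 := by
  set n := truncationLevel ρ ε
  have hvariance : ∑ p ∈ range (n + 1), C * ρ ^ (p - 1) / sampleSize δ ε p
      ≤ C * ε ^ 2 * ∑' p : ℕ, ρ ^ (p - 1) * ((p : ℝ) + 1) ^ (1 + δ) := by
    calc ∑ p ∈ range (n + 1), C * ρ ^ (p - 1) / sampleSize δ ε p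
        ≤ ∑ p ∈ range (n + 1), C * ε ^ 2 * (ρ ^ (p - 1) * ((p : ℝ) + 1) ^ (1 + δ)) :=
          sum_le_sum fun p _ => (div_sampleSize_le (by positivity) hε p).trans_eq (by ring)
      _ ≤ C * ε ^ 2 * ∑' p : ℕ, ρ ^ (p - 1) * ((p : ℝ) + 1) ^ (1 + δ) := by
          rw [← mul_sum]
          gcongr
          exact (summable_pow_sub_one_mul_add_one_rpow hρ0 hρ1 _).sum_le_tsum _
            fun p _ => by positivity
  have hbias : ρ ^ (2 * n) ≤ ε ^ 2 := by
    rw [mul_comm, pow_mul]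
    gcongr
    exact pow_truncationLevel_le hρ0 hρ1 hε
  calc C / sampleSize δ ε 0 + ∑ p ∈ Icc 1 n, C * ρ ^ (p - 1) / sampleSize δ ε p + C * ρ ^ (2 * n)
      = ∑ p ∈ range (n + 1), C * ρ ^ (p - 1) / sampleSize δ ε p + C * ρ ^ (2 * n) := by
        rw [range_eq_Ico, sum_eq_sum_Ico_succ_bot n.succ_pos, zero_add, Nat.succ_eq_add_one,
          Ico_add_one_right_eq_Icc, zero_tsub, pow_zero, mul_one]
    _ ≤ C * ε ^ 2 * ∑' p : ℕ, ρ ^ (p - 1) * ((p : ℝ) + 1) ^ (1 + δ) + C * ε ^ 2 := by gcongr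
    _ = C * (∑' p : ℕ, ρ ^ (p - 1) * ((p : ℝ) + 1) ^ (1 + δ) + 1) * ε ^ 2 := by ring

theorem truncationLevel_add_sum_sampleSize_le (hρ0 : 0 < ρ) (hρ1 : ρ < 1) (hδ : 0 < δ)
    (hε0 : 0 < ε) (hε1 : ε ≤ 1) :
    (truncationLevel ρ ε : ℝ) + ∑ p ∈ range (truncationLevel ρ ε + 1), (sampleSize δ ε p : ℝ)
      ≤ (∑' p : ℕ, ((p : ℝ) + 1) ^ (-(1 + δ)) + 2 / |log ρ| + 3) * ε ^ (-2 : ℝ) := by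
  have hE := rpow_neg_two_eq_inv_sq hε0
  set n := truncationLevel ρ ε
  set E := ε ^ (-2 : ℝ)
  set T := ∑' p : ℕ, ((p : ℝ) + 1) ^ (-(1 + δ))
  have hE1 : 1 ≤ E := by
    rw [hE]
    exact one_le_inv₀ (by positivity) |>.mpr (by nlinarith)
  have hsamples : ∑ p ∈ range (n + 1), (sampleSize δ ε p : ℝ) ≤ E * T + (n + 1) :=
    calc ∑ p ∈ range (n + 1), (sampleSize δ ε p : ℝ)
        ≤ ∑ p ∈ range (n + 1), E * ((p : ℝ) + 1) ^ (-(1 + δ)) + #(range (n + 1)) :=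
          sum_natCeil_le_sum_add_card _ fun p _ => by positivity
      _ ≤ E * T + (n + 1) := by
          rw [← mul_sum, card_range, Nat.cast_succ]
          gcongr
          exact (summable_add_one_rpow_neg (by linarith)).sum_le_tsum _ fun p _ => by positivity
  have hn : (n : ℝ) ≤ E / |log ρ| + 1 := by
    refine (truncationLevel_le hρ0 hρ1 hε0 hε1).trans ?_
    have hlogρ : 0 < |log ρ| := abs_pos.mpr (log_neg hρ0 hρ1).ne
    gcongr
    rw [hE]
    exact inv_anti₀ (by positivity) (by nlinarith)
  have hsplit : (T + 2 / |log ρ| + 3) * E = E * T + 2 * (E / |log ρ|) + 3 * E := by ring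
  linarith

end Multilevel

/-- Cost of the multilevel estimator: with `n* = ⌈|log ε / log ρ|⌉` and
`N_p = ⌈ε⁻² (p+1)^{-1-δ}⌉`, the MSE bound (sum of level variances plus squared truncation
bias) is `O(ε²)` while the total cost `n* + ∑ N_p` is `O(ε⁻²)`. -/
theorem stmt6 (C ρ δ : ℝ) (hC : 0 < C) (hρ : ρ ∈ Set.Ioo (0:ℝ) 1) (hδ : 0 < δ) :
    ∃ K : ℝ, 0 < K ∧ ∀ ε : ℝ, ε ∈ Set.Ioo (0:ℝ) 1 →
      (let nstar : ℕ := ⌈|Real.log ε / Real.log ρ|⌉₊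
       let N : ℕ → ℕ := fun p => ⌈ε ^ (-2 : ℝ) * ((p : ℝ) + 1) ^ (-(1 + δ))⌉₊
       (C / (N 0) + ∑ p ∈ Finset.Icc 1 nstar, C * ρ ^ (p - 1) / (N p) + C * ρ ^ (2 * nstar)
          ≤ K * ε ^ 2) ∧
       ((nstar : ℝ) + ∑ p ∈ Finset.range (nstar + 1), (N p : ℝ) ≤ K * ε ^ (-2 : ℝ))) := by
  obtain ⟨hρ0, hρ1⟩ := hρ
  refine ⟨C * (∑' p : ℕ, ρ ^ (p - 1) * ((p : ℝ) + 1) ^ (1 + δ) + 1)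
      + (∑' p : ℕ, ((p : ℝ) + 1) ^ (-(1 + δ)) + 2 / |log ρ| + 3), by positivity, ?_⟩
  rintro ε ⟨hε0, hε1⟩ nstar N
  constructor
  · refine (variance_add_bias_le (δ := δ) hC.le hρ0 hρ1 hε0).trans ?_
    gcongr ?_ * _
    exact le_add_of_nonneg_right (by positivity)
  · refine (truncationLevel_add_sum_sampleSize_le hρ0 hρ1 hδ hε0 hε1.le).trans ?_
    gcongr ?_ * _
    exact le_add_of_nonneg_left (by positivity)
end

section
/- (Lemma 1, part 1.) For an HMM on X = E^d with E ⊂ ℝ compact, satisfying assumption A1 (uniform upper and lower bounds on g(x', y_p) f(x, x')), the joint densities of the first j coordinates of the time-0 smoother are uniformly bounded above and below: there exist 0 < C' ≤ C < ∞ such that for all 1 ≤ j ≤ d and all p ≥ 0, C' ≤ π_{p,0}(x_{0,1:j}) ≤ C for all x_{0,1:j} ∈ E^j. -/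
open MeasureTheory Set

/-- The box `E^d` inside `Fin d → ℝ`. -/
def box (d : ℕ) (E : Set ℝ) : Set (Fin d → ℝ) := Set.univ.pi fun _ => E

/-- Backward functional of the multidimensional HMM on `X = E^d`. -/
noncomputable def mback (d : ℕ) (E : Set ℝ) (f : (Fin d → ℝ) → (Fin d → ℝ) → ℝ)
    (g : ℕ → (Fin d → ℝ) → ℝ) : ℕ → ℕ → (Fin d → ℝ) → ℝ
  | 0, _, _ => 1
  | m + 1, k, x => ∫ z in box d E, f x z * g (k + 1) z * mback d E f g m (k + 1) z

/-- Density of the time-0 smoother `π_{p,0}` on `E^d` (observations absorbed in `g`). -/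
noncomputable def msmootherDen (d : ℕ) (E : Set ℝ) (f0 : (Fin d → ℝ) → ℝ)
    (f : (Fin d → ℝ) → (Fin d → ℝ) → ℝ) (g : ℕ → (Fin d → ℝ) → ℝ) (p : ℕ)
    (x : Fin d → ℝ) : ℝ :=
  f0 x * g 0 x * mback d E f g p 0 x / ∫ y in box d E, f0 y * g 0 y * mback d E f g p 0 y

/-- Marginal density in the first `j` coordinates of a density `π` on `E^d`
(the redundant integration over the first `j` coordinates is compensated by dividing
by `|E|^j`). -/
noncomputable def marg (d : ℕ) (E : Set ℝ) (π : (Fin d → ℝ) → ℝ) (j : ℕ)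
    (x : Fin d → ℝ) : ℝ :=
  (∫ z in box d E, π (fun i => if (i : ℕ) < j then x i else z i)) / (volume E).toReal ^ j

/-!
Under (A1) every backward function `mback m k` satisfies a Harnack inequality on the box,
`mback m k x ≤ (Cu / Cl) * mback m k y`: for `m ≥ 1` it integrates `mback (m - 1) (k + 1)`
against a kernel pinched between `Cl` and `Cu`, so the constant does not depend on `m`.
The unnormalised smoother density `f0 * g 0 * mback p 0` then satisfies one with constant
`(Cu / Cl) ^ 2`, and after normalisation it lies between `1 / ((Cu / Cl) ^ 2 |E| ^ d)` and
`(Cu / Cl) ^ 2 / |E| ^ d`, uniformly in `p`. Integrating out coordinates preserves such bounds.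
-/

section SetIntegral

variable {X : Type*} [MeasurableSpace X] {μ : Measure X} {s : Set X} {h : X → ℝ}

lemma setIntegral_le_of_le_const_real {c : ℝ} (hs : MeasurableSet s) (hμs : μ s ≠ ⊤)
    (hh : ∀ x ∈ s, h x ≤ c) (hint : IntegrableOn h s μ) :
    ∫ x in s, h x ∂μ ≤ c * μ.real s := by
  rw [mul_comm, ← smul_eq_mul, ← setIntegral_const c]
  exact setIntegral_mono_on hint (integrableOn_const hμs) hs hh

lemma integrableOn_of_mem_Icc {lo hi : ℝ} (hs : MeasurableSet s) (hμs : μ s ≠ ⊤)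
    (hh : Measurable h) (hb : ∀ x ∈ s, h x ∈ Icc lo hi) : IntegrableOn h s μ :=
  IntegrableOn.of_bound hμs.lt_top hh.aestronglyMeasurable (max |lo| |hi|) <|
    (ae_restrict_iff' hs).2 <| ae_of_all _ fun x hx => abs_le_max_abs_abs (hb x hx).1 (hb x hx).2

lemma setIntegral_mul_mem_Icc {F : X → ℝ} {c C : ℝ} (hs : MeasurableSet s)
    (hF : Measurable F) (hFb : ∀ x ∈ s, F x ∈ Icc c C) (hh : ∀ x ∈ s, 0 ≤ h x)
    (hint : IntegrableOn h s μ) :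
    ∫ x in s, F x * h x ∂μ ∈ Icc (c * ∫ x in s, h x ∂μ) (C * ∫ x in s, h x ∂μ) := by
  have hFh : IntegrableOn (fun x => F x * h x) s μ :=
    hint.bdd_mul hF.aestronglyMeasurable.restrict <|
      (ae_restrict_iff' hs).2 <| ae_of_all _ fun x hx =>
        abs_le_max_abs_abs (c := C) (hFb x hx).1 (hFb x hx).2
  rw [← integral_const_mul, ← integral_const_mul]
  exact ⟨setIntegral_mono_on (hint.const_mul c) hFh hs fun x hx =>
      mul_le_mul_of_nonneg_right (hFb x hx).1 (hh x hx),
    setIntegral_mono_on hFh (hint.const_mul C) hs fun x hx =>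
      mul_le_mul_of_nonneg_right (hFb x hx).2 (hh x hx)⟩

lemma div_setIntegral_mem_Icc {R : ℝ} (hs : MeasurableSet s) (hμs : 0 < μ.real s)
    (hint : IntegrableOn h s μ) (hR : ∀ x ∈ s, ∀ y ∈ s, h x ≤ R * h y) {x : X} (hx : x ∈ s)
    (hpos : 0 < h x) :
    h x / ∫ y in s, h y ∂μ ∈ Icc (1 / (R * μ.real s)) (R / μ.real s) := by
  have hμfin : μ s ≠ ⊤ := fun htop => by simp [measureReal_def, htop] at hμs
  have hR1 : 1 ≤ R := le_of_mul_le_mul_right (by simpa using hR x hx x hx) hpos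
  have hR0 : 0 < R := one_pos.trans_le hR1
  have hlo : h x / R * μ.real s ≤ ∫ y in s, h y ∂μ :=
    setIntegral_ge_of_const_le_real hs hμfin
      (fun y hy => (div_le_iff₀' hR0).2 (hR x hx y hy)) hint
  have hhi : ∫ y in s, h y ∂μ ≤ R * h x * μ.real s :=
    setIntegral_le_of_le_const_real hs hμfin (fun y hy => hR y hy x hx) hint
  have hI : 0 < ∫ y in s, h y ∂μ := lt_of_lt_of_le (by positivity) hlo
  constructor
  · rw [le_div_iff₀ hI]
    calc 1 / (R * μ.real s) * ∫ y in s, h y ∂μ ≤ 1 / (R * μ.real s) * (R * h x * μ.real s) := by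
          gcongr
      _ = h x := by field_simp
  · rw [div_le_iff₀ hI]
    calc h x = R / μ.real s * (h x / R * μ.real s) := by field_simp
      _ ≤ R / μ.real s * ∫ y in s, h y ∂μ := by gcongr

end SetIntegral

lemma le_div_mul_of_forall_mem_Icc {X : Type*} {s : Set X} {h : X → ℝ} {c C : ℝ} (hc : 0 < c)
    (hb : ∀ x ∈ s, h x ∈ Icc c C) {x y : X} (hx : x ∈ s) (hy : y ∈ s) :
    h x ≤ C / c * h y :=
  calc h x ≤ C := (hb x hx).2
    _ = C / c * c := (div_mul_cancel₀ C hc.ne').symm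
    _ ≤ C / c * h y := by
      have hC : 0 ≤ C / c := div_nonneg (hc.le.trans ((hb x hx).1.trans (hb x hx).2)) hc.le
      exact mul_le_mul_of_nonneg_left (hb y hy).1 hC

lemma pow_mem_Icc_min_max {t : ℝ} (ht : 0 ≤ t) {j d : ℕ} (hjd : j ≤ d) :
    t ^ j ∈ Icc (min 1 t ^ d) (max 1 t ^ d) :=
  ⟨(pow_le_pow_of_le_one (le_min zero_le_one ht) (min_le_left _ _) hjd).trans
      (pow_le_pow_left₀ (le_min zero_le_one ht) (min_le_right _ _) j),
    (pow_le_pow_left₀ ht (le_max_right _ _) j).trans (pow_le_pow_right₀ (le_max_left _ _) hjd)⟩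

section Box

variable {d : ℕ} {E : Set ℝ}

lemma mem_box {x : Fin d → ℝ} : x ∈ box d E ↔ ∀ i, x i ∈ E := by
  simp [box]

lemma measurableSet_box (hE : MeasurableSet E) : MeasurableSet (box d E) :=
  MeasurableSet.univ_pi fun _ => hE

lemma volume_box : volume (box d E) = volume E ^ d := by
  simp [box, volume_pi_pi]

lemma volume_box_ne_top (hE : volume E ≠ ⊤) : volume (box d E) ≠ ⊤ := by
  rw [volume_box]; exact ENNReal.pow_ne_top hE

lemma marg_mem_Icc (hE : MeasurableSet E) (hEfin : volume E ≠ ⊤) {π : (Fin d → ℝ) → ℝ}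
    (hπ : Measurable π) {lo hi : ℝ} (hb : ∀ y ∈ box d E, π y ∈ Icc lo hi) (j : ℕ)
    {x : Fin d → ℝ} (hx : x ∈ box d E) :
    marg d E π j x ∈ Icc (lo * volume.real (box d E) / (volume E).toReal ^ j)
      (hi * volume.real (box d E) / (volume E).toReal ^ j) := by
  set φ : (Fin d → ℝ) → (Fin d → ℝ) := fun z i => if (i : ℕ) < j then x i else z i
  have hφ : Measurable φ := measurable_pi_lambda _ fun i => by
    simp only [φ]; split_ifs <;> fun_prop
  have hφB : ∀ z ∈ box d E, φ z ∈ box d E := fun z hz => mem_box.2 fun i => by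
    by_cases hi : (i : ℕ) < j
    · simpa [φ, hi] using mem_box.1 hx i
    · simpa [φ, hi] using mem_box.1 hz i
  have hB := measurableSet_box (d := d) hE
  have hBfin := volume_box_ne_top (d := d) hEfin
  have hbφ : ∀ z ∈ box d E, π (φ z) ∈ Icc lo hi := fun z hz => hb _ (hφB z hz)
  have hint := integrableOn_of_mem_Icc hB hBfin (hπ.comp hφ) hbφ
  have hV : 0 ≤ (volume E).toReal ^ j := by positivity
  exact ⟨div_le_div_of_nonneg_right
      (setIntegral_ge_of_const_le_real hB hBfin (fun z hz => (hbφ z hz).1) hint) hV,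
    div_le_div_of_nonneg_right
      (setIntegral_le_of_le_const_real hB hBfin (fun z hz => (hbφ z hz).2) hint) hV⟩

end Box

section Backward

variable {d : ℕ} {E : Set ℝ} {f : (Fin d → ℝ) → (Fin d → ℝ) → ℝ} {g : ℕ → (Fin d → ℝ) → ℝ}
  {Cl Cu : ℝ}

lemma measurable_mback (hf : Measurable (Function.uncurry f)) (hg : ∀ k, Measurable (g k)) :
    ∀ m k, Measurable (mback d E f g m k)
  | 0, _ => measurable_const
  | m + 1, k => by
    have hint : Measurable fun q : (Fin d → ℝ) × (Fin d → ℝ) =>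
        f q.1 q.2 * g (k + 1) q.2 * mback d E f g m (k + 1) q.2 :=
      (hf.mul ((hg (k + 1)).comp measurable_snd)).mul
        ((measurable_mback hf hg m (k + 1)).comp measurable_snd)
    exact hint.stronglyMeasurable.integral_prod_right'.measurable

lemma mback_succ_mem_Icc (hE : MeasurableSet E) (hf : Measurable (Function.uncurry f))
    (hg : ∀ k, Measurable (g k))
    (hA : ∀ k, ∀ x ∈ box d E, ∀ z ∈ box d E, g (k + 1) z * f x z ∈ Icc Cl Cu) {m k : ℕ}
    (hnonneg : ∀ z ∈ box d E, 0 ≤ mback d E f g m (k + 1) z)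
    (hint : IntegrableOn (mback d E f g m (k + 1)) (box d E)) {x : Fin d → ℝ}
    (hx : x ∈ box d E) :
    mback d E f g (m + 1) k x ∈ Icc (Cl * ∫ z in box d E, mback d E f g m (k + 1) z)
      (Cu * ∫ z in box d E, mback d E f g m (k + 1) z) :=
  setIntegral_mul_mem_Icc (measurableSet_box hE)
    ((hf.comp measurable_prodMk_left).mul (hg (k + 1)))
    (fun z hz => mul_comm (g (k + 1) z) (f x z) ▸ hA k x hx z hz) hnonneg hint

lemma mback_mem_Icc (hE : MeasurableSet E) (hEfin : volume E ≠ ⊤)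
    (hf : Measurable (Function.uncurry f)) (hg : ∀ k, Measurable (g k)) (hCl : 0 ≤ Cl)
    (hA : ∀ k, ∀ x ∈ box d E, ∀ z ∈ box d E, g (k + 1) z * f x z ∈ Icc Cl Cu) :
    ∀ m k, ∀ x ∈ box d E, mback d E f g m k x ∈
      Icc ((Cl * volume.real (box d E)) ^ m) ((Cu * volume.real (box d E)) ^ m)
  | 0, _, _, _ => by simp [mback]
  | m + 1, k, x, hx => by
    have hB := measurableSet_box (d := d) hE
    have hBfin := volume_box_ne_top (d := d) hEfin
    have ih := mback_mem_Icc hE hEfin hf hg hCl hA m (k + 1)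
    have hint := integrableOn_of_mem_Icc hB hBfin (measurable_mback hf hg m (k + 1)) ih
    have hI := mback_succ_mem_Icc hE hf hg hA (fun z hz => le_trans (by positivity) (ih z hz).1)
      hint hx
    have hlo := setIntegral_ge_of_const_le_real hB hBfin (fun z hz => (ih z hz).1) hint
    have hhi := setIntegral_le_of_le_const_real hB hBfin (fun z hz => (ih z hz).2) hint
    have hCu : 0 ≤ Cu := hCl.trans ((hA k x hx x hx).1.trans (hA k x hx x hx).2)
    constructor
    · calc (Cl * volume.real (box d E)) ^ (m + 1)
          = Cl * ((Cl * volume.real (box d E)) ^ m * volume.real (box d E)) := by ring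
        _ ≤ _ := mul_le_mul_of_nonneg_left hlo hCl
        _ ≤ _ := hI.1
    · calc mback d E f g (m + 1) k x ≤ _ := hI.2
        _ ≤ Cu * ((Cu * volume.real (box d E)) ^ m * volume.real (box d E)) :=
          mul_le_mul_of_nonneg_left hhi hCu
        _ = (Cu * volume.real (box d E)) ^ (m + 1) := by ring

lemma mback_le_mul (hE : MeasurableSet E) (hEfin : volume E ≠ ⊤)
    (hf : Measurable (Function.uncurry f)) (hg : ∀ k, Measurable (g k)) (hCl : 0 < Cl)
    (hClu : Cl ≤ Cu) (hA : ∀ k, ∀ x ∈ box d E, ∀ z ∈ box d E, g (k + 1) z * f x z ∈ Icc Cl Cu)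
    (m k : ℕ) {x y : Fin d → ℝ} (hx : x ∈ box d E) (hy : y ∈ box d E) :
    mback d E f g m k x ≤ Cu / Cl * mback d E f g m k y := by
  cases m with
  | zero => simpa [mback] using (one_le_div hCl).2 hClu
  | succ m =>
    have hb := mback_mem_Icc hE hEfin hf hg hCl.le hA m (k + 1)
    have hnonneg z hz : 0 ≤ mback d E f g m (k + 1) z := le_trans (by positivity) (hb z hz).1
    have hint := integrableOn_of_mem_Icc (measurableSet_box hE) (volume_box_ne_top hEfin)
      (measurable_mback hf hg m (k + 1)) hb
    calc mback d E f g (m + 1) k x ≤ Cu * ∫ z in box d E, mback d E f g m (k + 1) z :=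
          (mback_succ_mem_Icc hE hf hg hA hnonneg hint hx).2
      _ = Cu / Cl * (Cl * ∫ z in box d E, mback d E f g m (k + 1) z) := by field_simp
      _ ≤ Cu / Cl * mback d E f g (m + 1) k y :=
          mul_le_mul_of_nonneg_left (mback_succ_mem_Icc hE hf hg hA hnonneg hint hy).1
            (div_nonneg (hCl.le.trans hClu) hCl.le)

end Backward

section Smoother

variable {d : ℕ} {E : Set ℝ} {f0 : (Fin d → ℝ) → ℝ} {f : (Fin d → ℝ) → (Fin d → ℝ) → ℝ}
  {g : ℕ → (Fin d → ℝ) → ℝ} {Cl Cu : ℝ}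

lemma measurable_msmootherDen (hf0 : Measurable f0) (hf : Measurable (Function.uncurry f))
    (hg : ∀ k, Measurable (g k)) (p : ℕ) : Measurable (msmootherDen d E f0 f g p) :=
  ((hf0.mul (hg 0)).mul (measurable_mback hf hg p 0)).div_const _

lemma msmootherDen_mem_Icc (hE : MeasurableSet E) (hEfin : volume E ≠ ⊤)
    (hV : 0 < volume.real (box d E)) (hf0 : Measurable f0)
    (hf : Measurable (Function.uncurry f)) (hg : ∀ k, Measurable (g k)) (hCl : 0 < Cl)
    (hClu : Cl ≤ Cu) (hA0 : ∀ x ∈ box d E, g 0 x * f0 x ∈ Icc Cl Cu)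
    (hA : ∀ k, ∀ x ∈ box d E, ∀ z ∈ box d E, g (k + 1) z * f x z ∈ Icc Cl Cu) (p : ℕ)
    {x : Fin d → ℝ} (hx : x ∈ box d E) :
    msmootherDen d E f0 f g p x ∈
      Icc (1 / ((Cu / Cl) ^ 2 * volume.real (box d E)))
        ((Cu / Cl) ^ 2 / volume.real (box d E)) := by
  set N : (Fin d → ℝ) → ℝ := fun x => f0 x * g 0 x * mback d E f g p 0 x
  have hinit : ∀ x ∈ box d E, f0 x * g 0 x ∈ Icc Cl Cu := fun x hx =>
    mul_comm (g 0 x) (f0 x) ▸ hA0 x hx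
  have hback := mback_mem_Icc hE hEfin hf hg hCl.le hA p 0
  have hCu : 0 ≤ Cu := hCl.le.trans hClu
  have hN : ∀ x ∈ box d E, N x ∈ Icc (Cl * (Cl * volume.real (box d E)) ^ p)
      (Cu * (Cu * volume.real (box d E)) ^ p) := fun x hx =>
    ⟨mul_le_mul (hinit x hx).1 (hback x hx).1 (by positivity) ((hCl.le).trans (hinit x hx).1),
      mul_le_mul (hinit x hx).2 (hback x hx).2 ((by positivity : (0 : ℝ) ≤ _).trans (hback x hx).1)
        hCu⟩
  have hint : IntegrableOn N (box d E) := integrableOn_of_mem_Icc (measurableSet_box hE)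
    (volume_box_ne_top hEfin) ((hf0.mul (hg 0)).mul (measurable_mback hf hg p 0)) hN
  have hHarnack : ∀ x ∈ box d E, ∀ y ∈ box d E, N x ≤ (Cu / Cl) ^ 2 * N y := fun x hx y hy =>
    calc N x ≤ (Cu / Cl * (f0 y * g 0 y)) * (Cu / Cl * mback d E f g p 0 y) :=
          mul_le_mul (le_div_mul_of_forall_mem_Icc hCl hinit hx hy)
            (mback_le_mul hE hEfin hf hg hCl hClu hA p 0 hx hy)
            ((by positivity : (0 : ℝ) ≤ _).trans (hback x hx).1)
            (mul_nonneg (div_nonneg hCu hCl.le) (hCl.le.trans (hinit y hy).1))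
      _ = (Cu / Cl) ^ 2 * N y := by ring
  exact div_setIntegral_mem_Icc (measurableSet_box hE) hV hint hHarnack hx
    (lt_of_lt_of_le (by positivity) (hN x hx).1)

end Smoother

theorem stmt7_general (d : ℕ) (a b : ℝ) (hab : a < b)
    (f0 : (Fin d → ℝ) → ℝ) (f : (Fin d → ℝ) → (Fin d → ℝ) → ℝ)
    (g : ℕ → (Fin d → ℝ) → ℝ)
    (hf0 : Measurable f0) (hf : Measurable (Function.uncurry f))
    (hg : ∀ p, Measurable (g p))
    (Cl Cu : ℝ) (hCl : 0 < Cl) (hClu : Cl < Cu)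
    (hA1_0 : ∀ x ∈ box d (Set.Icc a b), Cl ≤ g 0 x * f0 x ∧ g 0 x * f0 x ≤ Cu)
    (hA1 : ∀ p : ℕ, 1 ≤ p → ∀ x ∈ box d (Set.Icc a b), ∀ x' ∈ box d (Set.Icc a b),
      Cl ≤ g p x' * f x x' ∧ g p x' * f x x' ≤ Cu) :
    ∃ (C C' : ℝ), 0 < C' ∧ C' ≤ C ∧
      ∀ j : ℕ, 1 ≤ j → j ≤ d → ∀ p : ℕ, ∀ x ∈ box d (Set.Icc a b),
        C' ≤ marg d (Set.Icc a b) (msmootherDen d (Set.Icc a b) f0 f g p) j x ∧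
          marg d (Set.Icc a b) (msmootherDen d (Set.Icc a b) f0 f g p) j x ≤ C := by
  have hE : MeasurableSet (Icc a b) := measurableSet_Icc
  have hEfin : volume (Icc a b) ≠ ⊤ := by simp
  have hba : 0 < b - a := sub_pos.2 hab
  have hlen : (volume (Icc a b)).toReal = b - a := by simp [hab.le]
  have hV : volume.real (box d (Icc a b)) = (b - a) ^ d := by
    rw [measureReal_def, volume_box, ENNReal.toReal_pow, hlen]
  set R := (Cu / Cl) ^ 2
  have hR : 1 ≤ R := one_le_pow₀ ((one_le_div hCl).2 hClu.le)
  refine ⟨R / min 1 (b - a) ^ d, 1 / (R * max 1 (b - a) ^ d), by positivity, ?_, ?_⟩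
  · calc 1 / (R * max 1 (b - a) ^ d) ≤ 1 :=
        div_le_one_of_le₀ (one_le_mul_of_one_le_of_one_le hR (one_le_pow₀ (le_max_left _ _)))
          (by positivity)
      _ ≤ R := hR
      _ ≤ R / min 1 (b - a) ^ d :=
        le_div_self (by positivity) (by positivity) (pow_le_one₀ (by positivity) (min_le_left _ _))
  · intro j _ hjd p x hx
    have hden y (hy : y ∈ box d (Icc a b)) :=
      msmootherDen_mem_Icc hE hEfin (hV ▸ by positivity) hf0 hf hg hCl hClu.le hA1_0
        (fun k => hA1 (k + 1) k.succ_pos) p hy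
    have hmarg := marg_mem_Icc hE hEfin (measurable_msmootherDen hf0 hf hg p) hden j hx
    rw [hV, hlen] at hmarg
    have hpow := pow_mem_Icc_min_max hba.le hjd
    constructor
    · calc 1 / (R * max 1 (b - a) ^ d) ≤ 1 / (R * (b - a) ^ j) := by gcongr; exact hpow.2
        _ = 1 / (R * (b - a) ^ d) * (b - a) ^ d / (b - a) ^ j := by field_simp
        _ ≤ _ := hmarg.1
    · calc _ ≤ R / (b - a) ^ d * (b - a) ^ d / (b - a) ^ j := hmarg.2
        _ = R / (b - a) ^ j := by field_simp
        _ ≤ R / min 1 (b - a) ^ d := by gcongr; exact hpow.1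

/-- Lemma 1, part 1: under (A1), the marginal densities in the first `j` coordinates of the
time-0 smoother are bounded above and below, uniformly in `p`. -/
theorem stmt7 (d : ℕ) (hd : 1 ≤ d) (a b : ℝ) (hab : a < b)
    (f0 : (Fin d → ℝ) → ℝ) (f : (Fin d → ℝ) → (Fin d → ℝ) → ℝ)
    (g : ℕ → (Fin d → ℝ) → ℝ)
    (hf0 : Measurable f0) (hf : Measurable (Function.uncurry f))
    (hg : ∀ p, Measurable (g p))
    (Cl Cu : ℝ) (hCl : 0 < Cl) (hClu : Cl < Cu)
    (hA1_0 : ∀ x ∈ box d (Set.Icc a b), Cl ≤ g 0 x * f0 x ∧ g 0 x * f0 x ≤ Cu)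
    (hA1 : ∀ p : ℕ, 1 ≤ p → ∀ x ∈ box d (Set.Icc a b), ∀ x' ∈ box d (Set.Icc a b),
      Cl ≤ g p x' * f x x' ∧ g p x' * f x x' ≤ Cu) :
    ∃ (C C' : ℝ), 0 < C' ∧ C' ≤ C ∧
      ∀ j : ℕ, 1 ≤ j → j ≤ d → ∀ p : ℕ, ∀ x ∈ box d (Set.Icc a b),
        C' ≤ marg d (Set.Icc a b) (msmootherDen d (Set.Icc a b) f0 f g p) j x ∧
          marg d (Set.Icc a b) (msmootherDen d (Set.Icc a b) f0 f g p) j x ≤ C :=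
  stmt7_general d a b hab f0 f g hf0 hf hg Cl Cu hCl hClu hA1_0 hA1
end
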